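/- arXiv:1702.08279 — 8 statements merged into one kernel-verified Lean document; each statement's English description precedes it below -/
import Mathlib

section
/- For every object x of C and every short exact sequence 0 → F → G → H → 0 in Fct(C, A), there exists a connecting morphism κ_x(H) → δ_x(F) making the six-term sequence 0 → κ_x(F) → κ_x(G) → κ_x(H) → δ_x(F) → δ_x(G) → δ_x(H) → 0 exact in Fct(C, A), where the morphisms κ_x(F) → κ_x(G), κ_x(G) → κ_x(H), δ_x(F) → δ_x(G) and δ_x(G) → δ_x(H) are those obtained by applying the functors κ_x and δ_x to the morphisms of the given short exact sequence. -/
/-! The components of `kernel.ι i_x`, `i_x` and `cokernel.π i_x` at the three terms of the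
sequence form a snake diagram whose middle rows are the sequence and its translate. The translate
is again short exact because precomposition with `x ⊗ -` is an exact functor, and the outer rows
are kernels and cokernels of the vertical maps because (co)kernels of natural transformations are
computed pointwise. The snake lemma then provides the connecting morphism and the exactness. -/

open CategoryTheory CategoryTheory.Limits CategoryTheory.MonoidalCategory

variable {C : Type*} [Category C] [MonoidalCategory C]
variable {A : Type*} [Category A] [Abelian A]

/-- The translation endofunctor `τ_x` of `Fct(C, A)`: precomposition with `x ⊗ -`. -/
noncomputable def tauF (A : Type*) [Category A] (x : C) : (C ⥤ A) ⥤ (C ⥤ A) :=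
  (Functor.whiskeringLeft C C A).obj (tensorLeft x)

/-- The component `i_x(F) : F ⟶ τ_x F`, whose component at `c` is
`F` applied to `c ≅ 𝟙 ⊗ c ⟶ x ⊗ c`. -/
def iApp (hI : IsInitial (𝟙_ C)) (x : C) (F : C ⥤ A) : F ⟶ tensorLeft x ⋙ F where
  app c := F.map ((λ_ c).inv ≫ hI.to x ▷ c)
  naturality c c' f := by
    dsimp
    rw [← F.map_comp, ← F.map_comp]
    congr 1
    rw [leftUnitor_inv_naturality_assoc, whisker_exchange, Category.assoc]

/-- The natural transformation `i_x : Id ⟶ τ_x` of endofunctors of `Fct(C, A)`. -/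
noncomputable def iNT (hI : IsInitial (𝟙_ C)) (x : C) :
    𝟭 (C ⥤ A) ⟶ tauF A x where
  app F := iApp hI x F
  naturality F G η := by
    ext c
    exact (η.naturality _).symm

/-- The evanescence endofunctor `κ_x = ker(i_x)` of `Fct(C, A)`. -/
noncomputable def kappaF (hI : IsInitial (𝟙_ C)) (x : C) : (C ⥤ A) ⥤ (C ⥤ A) :=
  kernel (iNT (A := A) hI x)

/-- The difference endofunctor `δ_x = coker(i_x)` of `Fct(C, A)`. -/
noncomputable def deltaF (hI : IsInitial (𝟙_ C)) (x : C) : (C ⥤ A) ⥤ (C ⥤ A) :=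
  cokernel (iNT (A := A) hI x)

namespace CategoryTheory.NatTrans

variable {D E : Type*} [Category D] [Category E] [Abelian E] {Φ Ψ : D ⥤ E} (η : Φ ⟶ Ψ)

lemma kernel_ι_app_comp_app (X : D) : (kernel.ι η).app X ≫ η.app X = 0 := by
  rw [← comp_app, kernel.condition, zero_app]

lemma app_comp_cokernel_π_app (X : D) : η.app X ≫ (cokernel.π η).app X = 0 := by
  rw [← comp_app, cokernel.condition, zero_app]

noncomputable def isLimitKernelForkApp (X : D) :
    IsLimit (KernelFork.ofι _ (kernel_ι_app_comp_app η X)) :=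
  KernelFork.mapIsLimit _ (kernelIsKernel η) ((evaluation D E).obj X)

noncomputable def isColimitCokernelCoforkApp (X : D) :
    IsColimit (CokernelCofork.ofπ _ (app_comp_cokernel_π_app η X)) :=
  CokernelCofork.mapIsColimit _ (cokernelIsCokernel η) ((evaluation D E).obj X)

instance mono_kernel_ι_app (X : D) : Mono ((kernel.ι η).app X) :=
  mono_of_isLimit_fork (isLimitKernelForkApp η X)

instance epi_cokernel_π_app (X : D) : Epi ((cokernel.π η).app X) :=
  epi_of_isColimit_cofork (isColimitCokernelCoforkApp η X)

variable [HasZeroMorphisms D]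

instance [Φ.PreservesZeroMorphisms] : (kernel η).PreservesZeroMorphisms where
  map_zero X Y := by
    rw [← cancel_mono ((kernel.ι η).app Y), (kernel.ι η).naturality, Φ.map_zero, comp_zero,
      zero_comp]

instance [Ψ.PreservesZeroMorphisms] : (cokernel η).PreservesZeroMorphisms where
  map_zero X Y := by
    rw [← cancel_epi ((cokernel.π η).app X), ← (cokernel.π η).naturality, Ψ.map_zero, comp_zero,
      zero_comp]

variable [Φ.PreservesZeroMorphisms] [Ψ.PreservesZeroMorphisms]

noncomputable def snakeInput (S : ShortComplex D) (hΦ : (S.map Φ).Exact) [Epi (Φ.map S.g)]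
    (hΨ : (S.map Ψ).Exact) [Mono (Ψ.map S.f)] : ShortComplex.SnakeInput E where
  L₀ := S.map (kernel η)
  L₁ := S.map Φ
  L₂ := S.map Ψ
  L₃ := S.map (cokernel η)
  v₀₁ := S.mapNatTrans (kernel.ι η)
  v₁₂ := S.mapNatTrans η
  v₂₃ := S.mapNatTrans (cokernel.π η)
  w₀₂ := by ext <;> exact kernel_ι_app_comp_app η _
  w₁₃ := by ext <;> exact app_comp_cokernel_π_app η _
  h₀ := ShortComplex.isLimitOfIsLimitπ _
    ((isLimitMapConeForkEquiv' _ _).symm (isLimitKernelForkApp η S.X₁))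
    ((isLimitMapConeForkEquiv' _ _).symm (isLimitKernelForkApp η S.X₂))
    ((isLimitMapConeForkEquiv' _ _).symm (isLimitKernelForkApp η S.X₃))
  h₃ := ShortComplex.isColimitOfIsColimitπ _
    ((isColimitMapCoconeCoforkEquiv' _ _).symm (isColimitCokernelCoforkApp η S.X₁))
    ((isColimitMapCoconeCoforkEquiv' _ _).symm (isColimitCokernelCoforkApp η S.X₂))
    ((isColimitMapCoconeCoforkEquiv' _ _).symm (isColimitCokernelCoforkApp η S.X₃))
  L₁_exact := hΦ
  epi_L₁_g := ‹_›
  L₂_exact := hΨ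
  mono_L₂_f := ‹_›

end CategoryTheory.NatTrans

instance (x : C) : PreservesFiniteLimits (tauF A x) := by
  unfold tauF; infer_instance

instance (x : C) : PreservesFiniteColimits (tauF A x) := by
  unfold tauF; infer_instance

/-- For every short exact sequence `0 → F → G → H → 0` in `Fct(C, A)` there is a
connecting morphism `κ_x(H) → δ_x(F)` making the six-term sequence
`0 → κ_x F → κ_x G → κ_x H → δ_x F → δ_x G → δ_x H → 0` exact. -/
theorem six_term_exact_sequence_of_shortExact
    (hI : IsInitial (𝟙_ C)) (x : C)
    (S : ShortComplex (C ⥤ A)) (hS : S.ShortExact) :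
    ∃ (conn : (kappaF hI x).obj S.X₃ ⟶ (deltaF hI x).obj S.X₁)
      (w₁ : (kappaF hI x).map S.f ≫ (kappaF hI x).map S.g = 0)
      (w₂ : (kappaF hI x).map S.g ≫ conn = 0)
      (w₃ : conn ≫ (deltaF hI x).map S.f = 0)
      (w₄ : (deltaF hI x).map S.f ≫ (deltaF hI x).map S.g = 0),
      Mono ((kappaF hI x).map S.f) ∧
      (ShortComplex.mk _ _ w₁).Exact ∧
      (ShortComplex.mk _ _ w₂).Exact ∧
      (ShortComplex.mk _ _ w₃).Exact ∧
      (ShortComplex.mk _ _ w₄).Exact ∧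
      Epi ((deltaF hI x).map S.g) := by
  have hτS : (S.map (tauF A x)).ShortExact := hS.map_of_exact _
  have := hS.epi_g
  have : Mono ((tauF A x).map S.f) := hτS.mono_f
  let E := (iNT (A := A) hI x).snakeInput S hS.exact hτS.exact
  have : Mono E.L₁.f := hS.mono_f
  have : Epi E.L₂.g := hτS.epi_g
  exact ⟨E.δ, E.L₀.zero, E.L₀_g_δ, E.δ_L₃_f, E.L₃.zero, E.mono_L₀_f, E.L₀_exact, E.L₁'_exact,
    E.L₂'_exact, E.L₃_exact, E.epi_L₃_g⟩
end

section
/- Assume in addition that C is braided monoidal. Then for all objects x and y of C, the difference endofunctors commute up to natural isomorphism: there is a natural isomorphism δ_x ∘ δ_y ≅ δ_y ∘ δ_x of endofunctors of Fct(C, A). -/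
open CategoryTheory CategoryTheory.Limits CategoryTheory.MonoidalCategory

variable {C : Type*} [Category C] [MonoidalCategory C]
variable {A : Type*} [Category A] [Abelian A]

/-!
Since `τ_x` is exact, applying `δ_x` to `δ_y F = coker(i_y F)` gives the total cokernel of the
square formed by `i_y F`, `i_x F`, `τ_x(i_y F)` and `i_x(τ_y F)`, i.e. the cokernel of
`τ_y F ⊕ τ_x F → τ_x τ_y F`. The braiding identifies `τ_x τ_y` with `τ_y τ_x`, and since `i_x`
and `i_y` are induced by maps out of the unit, naturality of the braiding makes it carry
`i_x(τ_y F)` to `τ_y(i_x F)` and `τ_x(i_y F)` to `i_y(τ_x F)`. So it exchanges the two summands,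
and the total cokernels of `δ_x δ_y` and `δ_y δ_x` agree.
-/

noncomputable def cokernelCompCokernelπIso {D : Type*} [Category D] [HasZeroMorphisms D]
    [HasCokernels D] [HasBinaryCoproducts D] {X Y Z : D} (a : X ⟶ Z) (b : Y ⟶ Z) :
    cokernel (a ≫ cokernel.π b) ≅ cokernel (coprod.desc a b) where
  hom := cokernel.desc _
    (cokernel.desc b (cokernel.π _) (by
      simpa only [coprod.inr_desc_assoc, comp_zero] using
        coprod.inr ≫= cokernel.condition (coprod.desc a b)))
    (by simpa only [Category.assoc, cokernel.π_desc, coprod.inl_desc_assoc, comp_zero] using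
        coprod.inl ≫= cokernel.condition (coprod.desc a b))
  inv := cokernel.desc _ (cokernel.π b ≫ cokernel.π _) (by
    ext
    · rw [coprod.inl_desc_assoc, ← Category.assoc, cokernel.condition, comp_zero]
    · rw [coprod.inr_desc_assoc, cokernel.condition_assoc, zero_comp, comp_zero])
  hom_inv_id := by ext; simp
  inv_hom_id := by ext; simp

section PointedEndofunctors

variable {E : Type*} [Category E] [Abelian E] {T T' : E ⥤ E} (i : 𝟭 E ⟶ T) (i' : 𝟭 E ⟶ T')

theorem cokernel_π_comp_whiskerLeft_comp_iso_hom [T.Additive]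
    [PreservesColimitsOfShape WalkingParallelPair T] :
    (cokernel.π i' ≫ (Functor.rightUnitor (cokernel i')).inv ≫
        Functor.whiskerLeft (cokernel i') i) ≫
      (PreservesCokernel.iso ((Functor.whiskeringRight E E E).obj T) i').hom =
      ((Functor.rightUnitor T').inv ≫ Functor.whiskerLeft T' i) ≫
        cokernel.π (((Functor.whiskeringRight E E E).obj T).map i') := by
  simp only [← PreservesCokernel.π_iso_hom, ← Category.assoc, cancel_mono]
  ext F
  simpa using i.naturality ((cokernel.π i').app F)

noncomputable def cokernelCompCokernelIso [T.Additive]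
    [PreservesColimitsOfShape WalkingParallelPair T] :
    cokernel i' ⋙ cokernel i ≅
      cokernel (coprod.desc ((Functor.rightUnitor T').inv ≫ Functor.whiskerLeft T' i)
        (Functor.whiskerRight i' T)) :=
  PreservesCokernel.iso ((Functor.whiskeringLeft E E E).obj (cokernel i')) i ≪≫
    (cokernelEpiComp (Functor.rightUnitor (cokernel i')).inv _).symm ≪≫
    (cokernelEpiComp (cokernel.π i') _).symm ≪≫
    cokernel.mapIso _ _ (Iso.refl _)
      (PreservesCokernel.iso ((Functor.whiskeringRight E E E).obj T) i')
      (by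
        rw [Iso.refl_hom, Category.id_comp]
        exact cokernel_π_comp_whiskerLeft_comp_iso_hom i i') ≪≫
    cokernelCompCokernelπIso _ _

noncomputable def cokernelCompCokernelCommIso [T.Additive] [T'.Additive]
    [PreservesColimitsOfShape WalkingParallelPair T]
    [PreservesColimitsOfShape WalkingParallelPair T'] (σ : T' ⋙ T ≅ T ⋙ T')
    (hσ : ∀ F, i.app (T'.obj F) ≫ σ.hom.app F = T'.map (i.app F))
    (hσ' : ∀ F, T.map (i'.app F) ≫ σ.hom.app F = i'.app (T.obj F)) :
    cokernel i' ⋙ cokernel i ≅ cokernel i ⋙ cokernel i' :=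
  cokernelCompCokernelIso i i' ≪≫
    cokernel.mapIso _ _
      (coprod.braiding _ _ ≪≫ coprod.mapIso (Functor.leftUnitor T) (Functor.leftUnitor T').symm) σ
      (by
        apply coprod.hom_ext <;>
          simp only [Iso.trans_hom, coprod.braiding_hom, coprod.mapIso_hom, Iso.symm_hom,
            coprod.inl_map_assoc, coprod.inr_map_assoc, coprod.inl_desc, coprod.inr_desc,
            coprod.desc_comp, Category.assoc] <;>
          ext F
        · simp [hσ]
        · simp [hσ']) ≪≫
    (cokernelCompCokernelIso i' i).symm

end PointedEndofunctors

instance tauF_additive {A : Type*} [Category A] [Preadditive A] (x : C) :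
    (tauF A x).Additive :=
  inferInstanceAs ((Functor.whiskeringLeft C C A).obj (tensorLeft x)).Additive

instance tauF_preservesColimitsOfShape {A : Type*} [Category A] (J : Type*) [Category J]
    [HasColimitsOfShape J A] (x : C) : PreservesColimitsOfShape J (tauF A x) :=
  whiskeringLeft_preservesColimitsOfShape J (tensorLeft x)

section Braided

variable [BraidedCategory C] {A : Type*} [Category A]

noncomputable def tensorLeftCommIso (x y : C) :
    tensorLeft x ⋙ tensorLeft y ≅ tensorLeft y ⋙ tensorLeft x :=
  (tensorLeftTensor y x).symm ≪≫ (tensoringLeft C).mapIso (β_ y x) ≪≫ tensorLeftTensor x y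

theorem tensorLeftCommIso_hom_app (x y c : C) :
    (tensorLeftCommIso x y).hom.app c = (α_ y x c).inv ≫ (β_ y x).hom ▷ c ≫ (α_ x y c).hom := by
  simp [tensorLeftCommIso]

theorem whiskerLeft_comp_tensorLeftCommIso_hom_app {x : C} (u : 𝟙_ C ⟶ x) (y c : C) :
    y ◁ ((λ_ c).inv ≫ u ▷ c) ≫ (tensorLeftCommIso x y).hom.app c =
      (λ_ (y ⊗ c)).inv ≫ u ▷ (y ⊗ c) := by
  rw [tensorLeftCommIso_hom_app, MonoidalCategory.whiskerLeft_comp, Category.assoc,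
    associator_inv_naturality_middle_assoc, ← comp_whiskerRight_assoc,
    BraidedCategory.braiding_naturality_right, braiding_tensorUnit_right]
  monoidal

theorem whiskerRight_comp_tensorLeftCommIso_hom_app {y : C} (u : 𝟙_ C ⟶ y) (x c : C) :
    ((λ_ (x ⊗ c)).inv ≫ u ▷ (x ⊗ c)) ≫ (tensorLeftCommIso x y).hom.app c =
      x ◁ ((λ_ c).inv ≫ u ▷ c) := by
  rw [tensorLeftCommIso_hom_app, Category.assoc, associator_inv_naturality_left_assoc,
    ← comp_whiskerRight_assoc, BraidedCategory.braiding_naturality_left,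
    braiding_tensorUnit_left]
  monoidal

noncomputable def tauCommIso (x y : C) : tauF A y ⋙ tauF A x ≅ tauF A x ⋙ tauF A y :=
  (Functor.whiskeringLeft C C A).mapIso (tensorLeftCommIso x y)

theorem iNT_app_tauF_obj_comp_tauCommIso_hom_app (hI : IsInitial (𝟙_ C)) (x y : C) (F : C ⥤ A) :
    (iNT hI x).app ((tauF A y).obj F) ≫ (tauCommIso x y).hom.app F =
      (tauF A y).map ((iNT hI x).app F) := by
  ext c
  simp only [NatTrans.comp_app]
  dsimp [iNT, iApp, tauF, tauCommIso]
  rw [← F.map_comp, whiskerLeft_comp_tensorLeftCommIso_hom_app]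

theorem tauF_map_iNT_app_comp_tauCommIso_hom_app (hI : IsInitial (𝟙_ C)) (x y : C) (F : C ⥤ A) :
    (tauF A x).map ((iNT hI y).app F) ≫ (tauCommIso x y).hom.app F =
      (iNT hI y).app ((tauF A x).obj F) := by
  ext c
  simp only [NatTrans.comp_app]
  dsimp [iNT, iApp, tauF, tauCommIso]
  rw [← F.map_comp, whiskerRight_comp_tensorLeftCommIso_hom_app]

end Braided

/-- The difference endofunctors commute up to natural isomorphism:
`δ_x ∘ δ_y ≅ δ_y ∘ δ_x`. -/
theorem delta_comm_delta [BraidedCategory C] (hI : IsInitial (𝟙_ C)) (x y : C) :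
    Nonempty ((deltaF (A := A) hI y ⋙ deltaF hI x) ≅ (deltaF hI x ⋙ deltaF hI y)) :=
  ⟨cokernelCompCokernelCommIso (iNT hI x) (iNT hI y) (tauCommIso x y)
    (iNT_app_tauF_obj_comp_tauCommIso_hom_app hI x y)
    (tauF_map_iNT_app_comp_tauCommIso_hom_app hI x y)⟩
end

section
/- For every object x of C and every functor F in Fct(C, A), the composite natural transformation i_x(κ_x(F)) : κ_x(F) → τ_x(κ_x(F)) is zero; consequently the canonical kernel inclusion κ_x(κ_x(F)) → κ_x(F) is an isomorphism, so that the natural inclusion κ_x ∘ κ_x ↪ κ_x is a natural isomorphism of endofunctors of Fct(C, A). -/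
open CategoryTheory CategoryTheory.Limits CategoryTheory.MonoidalCategory

variable {C : Type*} [Category C] [MonoidalCategory C]
variable {A : Type*} [Category A] [Abelian A]

/-!
Naturality of `i_x` along the monomorphism `ι : κ_x F ⟶ F` gives
`i_x(κ_x F) ≫ τ_x(ι) = ι ≫ i_x(F) = 0`, and `τ_x` preserves monomorphisms (they are
objectwise), so `i_x(κ_x F) = 0`. Kernels in a functor category are computed objectwise,
so the kernel inclusion of `i_x` at an object where `i_x` vanishes is an isomorphism.
-/

namespace CategoryTheory

instance Functor.whiskeringLeft_obj_preservesMonomorphisms {J K D : Type*} [Category J]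
    [Category K] [Category D] [HasPullbacks D] (H : J ⥤ K) :
    ((Functor.whiskeringLeft J K D).obj H).PreservesMonomorphisms where
  preserves f _ :=
    (NatTrans.mono_iff_mono_app _).2 fun j => inferInstanceAs (Mono (f.app (H.obj j)))

variable {D : Type*} [Category D] [HasZeroMorphisms D]

theorem NatTrans.app_kernel_obj_eq_zero [HasPullbacks D] {T : D ⥤ D}
    [T.PreservesMonomorphisms] (α : 𝟭 D ⟶ T) [HasKernel α] (X : D) :
    α.app ((kernel α).obj X) = 0 := by
  rw [← cancel_mono (T.map ((kernel.ι α).app X)), zero_comp]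
  calc α.app ((kernel α).obj X) ≫ T.map ((kernel.ι α).app X)
      = (kernel.ι α ≫ α).app X := (α.naturality _).symm
    _ = 0 := by rw [kernel.condition]; rfl

theorem NatTrans.isIso_kernel_ι_app_of_app_eq_zero {J : Type*} [Category J]
    [HasLimitsOfShape WalkingParallelPair D] {F G : J ⥤ D} (α : F ⟶ G) {j : J}
    (h : α.app j = 0) : IsIso ((kernel.ι α).app j) := by
  change IsIso (((evaluation J D).obj j).map (kernel.ι α))
  rw [← kernelComparison_comp_ι α ((evaluation J D).obj j),
    ← kernelIsoOfEq_hom_comp_ι (show ((evaluation J D).obj j).map α = 0 from h)]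
  infer_instance

end CategoryTheory

instance tauF_preservesMonomorphisms (x : C) : (tauF A x).PreservesMonomorphisms := by
  unfold tauF
  infer_instance

/-- `i_x(κ_x F) = 0`, hence the canonical inclusion `κ_x(κ_x F) → κ_x F` is an
isomorphism, and the natural inclusion `κ_x ∘ κ_x ↪ κ_x` is a natural isomorphism. -/
theorem kappa_kappa_iso (hI : IsInitial (𝟙_ C)) (x : C) :
    (∀ F : C ⥤ A, (iNT hI x).app ((kappaF hI x).obj F) = 0) ∧
    (∀ F : C ⥤ A, IsIso ((kernel.ι (iNT (A := A) hI x)).app ((kappaF hI x).obj F))) ∧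
    IsIso (Functor.whiskerLeft (kappaF (A := A) hI x) (kernel.ι (iNT hI x))) := by
  have i_kappa_eq_zero (F : C ⥤ A) : (iNT hI x).app ((kappaF hI x).obj F) = 0 :=
    NatTrans.app_kernel_obj_eq_zero (iNT hI x) F
  have isIso_ι_app (F : C ⥤ A) :
      IsIso ((kernel.ι (iNT (A := A) hI x)).app ((kappaF hI x).obj F)) :=
    NatTrans.isIso_kernel_ι_app_of_app_eq_zero _ (i_kappa_eq_zero F)
  have : ∀ F, IsIso ((Functor.whiskerLeft (kappaF (A := A) hI x) (kernel.ι (iNT hI x))).app F) :=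
    isIso_ι_app
  exact ⟨i_kappa_eq_zero, isIso_ι_app, NatIso.isIso_of_isIso_app _⟩
end

section
/- Assume in addition that C is braided monoidal. Then for all objects x and y of C and every functor F in Fct(C, A) there is an exact sequence 0 → κ_x(F) → κ_{x⊗y}(F) → τ_x(κ_y(F)) → δ_x(F) → δ_{x⊗y}(F) → τ_x(δ_y(F)) → 0 in Fct(C, A), natural in F. It arises from the factorization of i_{x⊗y}(F) as the composite F → τ_x(F) → τ_y(τ_x(F)) ≅ τ_{x⊗y}(F) of i_x(F) followed by i_y(τ_x(F)), together with the kernel–cokernel six-term exact sequence of a composite and the commutation isomorphisms τ_x ∘ κ_y ≅ κ_y ∘ τ_x and τ_x ∘ δ_y ≅ δ_y ∘ τ_x. (This is the exact sequence (1.6) of the paper, up to interchanging the roles of x and y.) -/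
/-!
Since `𝟙` is initial, `i_{x⊗y}` factors as `i_x` followed by the map `τ_x ⟶ τ_{x⊗y}` induced by
`x ⊗ c ⟶ x ⊗ (y ⊗ c) ≅ (x ⊗ y) ⊗ c`. Conjugated by the braiding
`(x ⊗ y) ⊗ c ≅ (y ⊗ x) ⊗ c ≅ y ⊗ (x ⊗ c)`, this second factor becomes `τ_x(i_y)`, whose kernel and
cokernel are `τ_x κ_y` and `τ_x δ_y` because `τ_x` is exact. The kernel–cokernel exact sequence of
a composite then gives the six terms.
-/

open CategoryTheory CategoryTheory.Limits CategoryTheory.MonoidalCategory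

variable {C : Type*} [Category C] [MonoidalCategory C]
variable {A : Type*} [Category A] [Abelian A]

section SixTerm

variable {D : Type*} [Category D] [Abelian D]

def HasSixTermExactSequence (K₁ K₂ K₃ Q₁ Q₂ Q₃ : D) : Prop :=
  ∃ (α : K₁ ⟶ K₂) (β : K₂ ⟶ K₃) (γ : K₃ ⟶ Q₁) (ε : Q₁ ⟶ Q₂) (ζ : Q₂ ⟶ Q₃)
    (w₁ : α ≫ β = 0) (w₂ : β ≫ γ = 0) (w₃ : γ ≫ ε = 0) (w₄ : ε ≫ ζ = 0),
    Mono α ∧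
    (ShortComplex.mk α β w₁).Exact ∧
    (ShortComplex.mk β γ w₂).Exact ∧
    (ShortComplex.mk γ ε w₃).Exact ∧
    (ShortComplex.mk ε ζ w₄).Exact ∧
    Epi ζ

theorem CategoryTheory.ComposableArrows.Exact.hasSixTermExactSequence {S : ComposableArrows D 5}
    (hS : S.Exact) [Mono (S.map' 0 1)] [Epi (S.map' 4 5)] {K₁ K₂ K₃ Q₁ Q₂ Q₃ : D}
    (e₁ : K₁ ≅ S.obj 0) (e₂ : K₂ ≅ S.obj 1) (e₃ : K₃ ≅ S.obj 2)
    (e₄ : Q₁ ≅ S.obj 3) (e₅ : Q₂ ≅ S.obj 4) (e₆ : Q₃ ≅ S.obj 5) :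
    HasSixTermExactSequence K₁ K₂ K₃ Q₁ Q₂ Q₃ := by
  let S' : ComposableArrows D 5 := .mk₅ (e₁.hom ≫ S.map' 0 1 ≫ e₂.inv)
    (e₂.hom ≫ S.map' 1 2 ≫ e₃.inv) (e₃.hom ≫ S.map' 2 3 ≫ e₄.inv)
    (e₄.hom ≫ S.map' 3 4 ≫ e₅.inv) (e₅.hom ≫ S.map' 4 5 ≫ e₆.inv)
  have sq {P P' Q Q' : D} (e : P ≅ P') (e' : Q ≅ Q') (h : P' ⟶ Q') :
      (e.hom ≫ h ≫ e'.inv) ≫ e'.hom = e.hom ≫ h := by simp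
  have e : S' ≅ S := ComposableArrows.isoMk₅ e₁ e₂ e₃ e₄ e₅ e₆
    (sq e₁ e₂ _) (sq e₂ e₃ _) (sq e₃ e₄ _) (sq e₄ e₅ _) (sq e₅ e₆ _)
  have hS' : S'.Exact := ComposableArrows.exact_of_iso e.symm hS
  exact ⟨_, _, _, _, _, hS'.toIsComplex.zero 0, hS'.toIsComplex.zero 1, hS'.toIsComplex.zero 2,
    hS'.toIsComplex.zero 3, mono_comp _ _, hS'.exact 0, hS'.exact 1, hS'.exact 2, hS'.exact 3,
    epi_comp _ _⟩

theorem hasSixTermExactSequence_of_comp {X Y Z : D} (f : X ⟶ Y) (g : Y ⟶ Z)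
    {K₁ K₂ K₃ Q₁ Q₂ Q₃ : D}
    (e₁ : K₁ ≅ kernel f) (e₂ : K₂ ≅ kernel (f ≫ g)) (e₃ : K₃ ≅ kernel g)
    (e₄ : Q₁ ≅ cokernel f) (e₅ : Q₂ ≅ cokernel (f ≫ g)) (e₆ : Q₃ ≅ cokernel g) :
    HasSixTermExactSequence K₁ K₂ K₃ Q₁ Q₂ Q₃ :=
  (kernelCokernelCompSequence_exact f g).hasSixTermExactSequence e₁ e₂ e₃ e₄ e₅ e₆

end SixTerm

def toTensorLeft (hI : IsInitial (𝟙_ C)) (x c : C) : c ⟶ x ⊗ c :=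
  (λ_ c).inv ≫ hI.to x ▷ c

lemma toTensorLeft_comp_whiskerLeft_toTensorLeft (hI : IsInitial (𝟙_ C)) (x y c : C) :
    toTensorLeft hI x c ≫ x ◁ toTensorLeft hI y c ≫ (α_ x y c).inv =
      toTensorLeft hI (x ⊗ y) c := by
  have coh : (λ_ c).inv ≫ (𝟙_ C) ◁ (λ_ c).inv ≫ (α_ (𝟙_ C) (𝟙_ C) c).inv =
      (λ_ c).inv ≫ (λ_ (𝟙_ C)).inv ▷ c := by monoidal
  have hto : (λ_ (𝟙_ C)).inv ≫ (𝟙_ C) ◁ hI.to y ≫ hI.to x ▷ y = hI.to (x ⊗ y) :=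
    hI.hom_ext _ _
  simp only [toTensorLeft, Category.assoc]
  rw [← whisker_exchange_assoc, MonoidalCategory.whiskerLeft_comp_assoc,
    associator_inv_naturality_left, associator_inv_naturality_middle_assoc,
    reassoc_of% coh, ← hto]
  simp only [comp_whiskerRight]

def tensorLeftInsert (hI : IsInitial (𝟙_ C)) (x y : C) :
    tensorLeft x ⟶ tensorLeft (x ⊗ y) where
  app c := x ◁ toTensorLeft hI y c ≫ (α_ x y c).inv
  naturality c c' h := by
    dsimp [toTensorLeft]
    rw [← MonoidalCategory.whiskerLeft_comp_assoc, leftUnitor_inv_naturality_assoc,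
      whisker_exchange]
    simp only [MonoidalCategory.whiskerLeft_comp, Category.assoc,
      associator_inv_naturality_right]

omit [Abelian A] in
lemma iNT_comp_tensorLeftInsert (hI : IsInitial (𝟙_ C)) (x y : C) :
    iNT (A := A) hI x ≫ (Functor.whiskeringLeft C C A).map (tensorLeftInsert hI x y) =
      iNT hI (x ⊗ y) := by
  ext F c
  dsimp [iNT, iApp, tensorLeftInsert, tauF]
  rw [← F.map_comp]
  exact congrArg F.map (toTensorLeft_comp_whiskerLeft_toTensorLeft hI x y c)

instance (x : C) : (tauF A x).Additive :=
  inferInstanceAs ((Functor.whiskeringLeft C C A).obj _).Additive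

instance (x : C) : PreservesLimitsOfShape WalkingParallelPair (tauF A x) :=
  inferInstanceAs (PreservesLimitsOfShape _ ((Functor.whiskeringLeft C C A).obj _))

instance (x : C) : PreservesColimitsOfShape WalkingParallelPair (tauF A x) :=
  inferInstanceAs (PreservesColimitsOfShape _ ((Functor.whiskeringLeft C C A).obj _))

section Braided

variable [BraidedCategory C]

lemma whiskerLeft_toTensorLeft_comp_braiding (hI : IsInitial (𝟙_ C)) (x y c : C) :
    x ◁ toTensorLeft hI y c ≫ (α_ x y c).inv ≫ (β_ x y).hom ▷ c ≫ (α_ y x c).hom =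
      toTensorLeft hI y (x ⊗ c) := by
  have coh : x ◁ (λ_ c).inv ≫ (α_ x (𝟙_ C) c).inv ≫
      (((ρ_ x).hom ≫ (λ_ x).inv) ▷ c) ≫ (α_ (𝟙_ C) x c).hom = (λ_ (x ⊗ c)).inv := by
    monoidal
  simp only [toTensorLeft, MonoidalCategory.whiskerLeft_comp, Category.assoc]
  rw [associator_inv_naturality_middle_assoc, ← comp_whiskerRight_assoc,
    BraidedCategory.braiding_naturality_right, comp_whiskerRight_assoc,
    associator_naturality_left, braiding_tensorUnit_right, reassoc_of% coh]

noncomputable def tensorLeftTensorBraided (x y : C) :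
    tensorLeft (x ⊗ y) ≅ tensorLeft x ⋙ tensorLeft y :=
  (tensoringLeft C).mapIso (β_ x y) ≪≫ tensorLeftTensor y x

omit [Abelian A] in
lemma tensorLeftInsert_comp_tensorLeftTensorBraided (hI : IsInitial (𝟙_ C)) (x y : C) :
    (Functor.whiskeringLeft C C A).map (tensorLeftInsert hI x y) ≫
        ((Functor.whiskeringLeft C C A).mapIso (tensorLeftTensorBraided x y)).hom =
      (Functor.leftUnitor (tauF A x)).inv ≫ Functor.whiskerRight (iNT hI y) (tauF A x) := by
  ext F c
  dsimp [tensorLeftInsert, tensorLeftTensorBraided, tauF, iNT, iApp]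
  rw [Category.id_comp, ← F.map_comp, Category.assoc]
  exact congrArg F.map (whiskerLeft_toTensorLeft_comp_braiding hI x y c)

noncomputable def kappaCompTauIso (hI : IsInitial (𝟙_ C)) (x y : C) :
    kappaF hI y ⋙ tauF A x ≅
      kernel ((Functor.whiskeringLeft C C A).map (tensorLeftInsert hI x y)) :=
  PreservesKernel.iso ((Functor.whiskeringRight _ _ _).obj (tauF A x)) (iNT hI y) ≪≫
    (kernel.mapIso _ _ (Functor.leftUnitor (tauF A x)).symm
      ((Functor.whiskeringLeft C C A).mapIso (tensorLeftTensorBraided x y))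
      (tensorLeftInsert_comp_tensorLeftTensorBraided hI x y)).symm

noncomputable def deltaCompTauIso (hI : IsInitial (𝟙_ C)) (x y : C) :
    deltaF hI y ⋙ tauF A x ≅
      cokernel ((Functor.whiskeringLeft C C A).map (tensorLeftInsert hI x y)) :=
  PreservesCokernel.iso ((Functor.whiskeringRight _ _ _).obj (tauF A x)) (iNT hI y) ≪≫
    (cokernel.mapIso _ _ (Functor.leftUnitor (tauF A x)).symm
      ((Functor.whiskeringLeft C C A).mapIso (tensorLeftTensorBraided x y))
      (tensorLeftInsert_comp_tensorLeftTensorBraided hI x y)).symm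

end Braided

/-- The natural exact sequence
`0 → κ_x → κ_{x⊗y} → τ_x ∘ κ_y → δ_x → δ_{x⊗y} → τ_x ∘ δ_y → 0`
(exactness in the abelian category of endofunctors of `Fct(C, A)`, i.e. objectwise,
naturally in `F`). -/
theorem kappa_delta_six_term [BraidedCategory C] (hI : IsInitial (𝟙_ C)) (x y : C) :
    ∃ (α : kappaF (A := A) hI x ⟶ kappaF hI (x ⊗ y))
      (β : kappaF hI (x ⊗ y) ⟶ kappaF hI y ⋙ tauF A x)
      (γ : kappaF hI y ⋙ tauF A x ⟶ deltaF hI x)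
      (ε : deltaF hI x ⟶ deltaF hI (x ⊗ y))
      (ζ : deltaF hI (x ⊗ y) ⟶ deltaF hI y ⋙ tauF A x)
      (w₁ : α ≫ β = 0) (w₂ : β ≫ γ = 0) (w₃ : γ ≫ ε = 0) (w₄ : ε ≫ ζ = 0),
      Mono α ∧
      (ShortComplex.mk α β w₁).Exact ∧
      (ShortComplex.mk β γ w₂).Exact ∧
      (ShortComplex.mk γ ε w₃).Exact ∧
      (ShortComplex.mk ε ζ w₄).Exact ∧
      Epi ζ := by
  have hcomp := iNT_comp_tensorLeftInsert (A := A) hI x y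
  exact hasSixTermExactSequence_of_comp (iNT hI x)
    ((Functor.whiskeringLeft C C A).map (tensorLeftInsert hI x y))
    (Iso.refl _) (kernelIsoOfEq hcomp.symm) (kappaCompTauIso hI x y)
    (Iso.refl _) (cokernelIsoOfEq hcomp.symm) (deltaCompTauIso hI x y)
end

section
/- Let n ≥ 0 and let J be a small category such that A has colimits of shape J (so that Fct(C, A) has colimits of shape J, computed objectwise). If D : J → Fct(C, A) is a diagram such that D(j) ∈ Pol_n for every object j of J, then the colimit of D belongs to Pol_n; that is, the class Pol_n of strong polynomial functors of degree ≤ n is closed under colimits. -/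
open CategoryTheory CategoryTheory.Limits CategoryTheory.MonoidalCategory

variable {C : Type*} [Category C] [MonoidalCategory C]
variable {A : Type*} [Category A] [Abelian A]

/-- `PolAux hI (n+1) F` says that `F` is strong polynomial of degree `≤ n`;
`PolAux hI 0 F` says that `F` is the zero functor (degree `≤ -1`). -/
def PolAux (hI : IsInitial (𝟙_ C)) : ℕ → (C ⥤ A) → Prop
  | 0 => fun F => IsZero F
  | n + 1 => fun F => ∀ x : C, PolAux hI n ((deltaF hI x).obj F)

/-- `Pol hI n F` : `F` is strong polynomial of degree `≤ n` (with `Pol_m = {0}` for `m < 0`). -/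
def Pol (hI : IsInitial (𝟙_ C)) (n : ℤ) (F : C ⥤ A) : Prop :=
  PolAux hI (n + 1).toNat F

/-! `δ_x` is the cokernel of `i_x : 𝟭 ⟶ τ_x`. Both `𝟭` and `τ_x` (a precomposition) preserve
colimits, and a cokernel of functors is a colimit computed pointwise, which commutes with other
colimits; so `δ_x` preserves colimits. Induction on the degree then reduces the claim to the fact
that a colimit of zero objects is zero. -/

section ColimitsOfFunctors

variable {J K D E : Type*} [Category J] [Category K] [Category D] [Category E]

lemma isZero_colimit [HasZeroMorphisms E] (F : K ⥤ E) [HasColimit F]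
    (h : ∀ k, IsZero (F.obj k)) : IsZero (colimit F) := by
  rw [IsZero.iff_id_eq_zero]
  exact colimit.hom_ext fun k => by simpa using (h k).eq_of_src _ _

lemma Functor.preservesColimitsOfShape_colimit [HasColimitsOfShape K E] (F : K ⥤ D ⥤ E)
    [∀ k, PreservesColimitsOfShape J (F.obj k)] : PreservesColimitsOfShape J (colimit F) := by
  have : PreservesColimitsOfShape J F.flip :=
    preservesColimitsOfShape_of_evaluation _ _ fun k => inferInstanceAs
      (PreservesColimitsOfShape J (F.obj k))
  exact preservesColimitsOfShape_of_natIso (colimitIsoFlipCompColim F).symm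

lemma NatTrans.preservesColimitsOfShape_cokernel [HasZeroMorphisms E]
    [HasColimitsOfShape WalkingParallelPair E] {F G : D ⥤ E} (α : F ⟶ G)
    [PreservesColimitsOfShape J F] [PreservesColimitsOfShape J G] :
    PreservesColimitsOfShape J (cokernel α) := by
  have : ∀ k, PreservesColimitsOfShape J ((parallelPair α 0).obj k) := by
    rintro (_ | _) <;> assumption
  exact Functor.preservesColimitsOfShape_colimit (parallelPair α 0)

end ColimitsOfFunctors

section Polynomial

variable (hI : IsInitial (𝟙_ C)) {J : Type*} [SmallCategory J] [HasColimitsOfShape J A]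

instance (x : C) : PreservesColimitsOfShape J (tauF A x) :=
  inferInstanceAs (PreservesColimitsOfShape J ((Functor.whiskeringLeft C C A).obj _))

instance (x : C) : PreservesColimitsOfShape J (deltaF (A := A) hI x) :=
  NatTrans.preservesColimitsOfShape_cokernel (iNT hI x)

lemma PolAux.of_iso : ∀ (n : ℕ) {F G : C ⥤ A}, (F ≅ G) → PolAux hI n F → PolAux hI n G
  | 0, _, _, e, h => IsZero.of_iso h e.symm
  | n + 1, _, _, e, h => fun x => PolAux.of_iso n ((deltaF hI x).mapIso e) (h x)

lemma PolAux.colimit : ∀ (n : ℕ) (D : J ⥤ C ⥤ A), (∀ j, PolAux hI n (D.obj j)) →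
    PolAux hI n (colimit D)
  | 0, D, h => isZero_colimit D h
  | n + 1, D, h => fun x =>
      PolAux.of_iso hI n (preservesColimitIso (deltaF hI x) D).symm
        (colimit n (D ⋙ deltaF hI x) fun j => h j x)

lemma Pol.colimit (n : ℤ) (D : J ⥤ C ⥤ A) (h : ∀ j, Pol hI n (D.obj j)) :
    Pol hI n (colimit D) :=
  PolAux.colimit hI _ D h

end Polynomial

/-- `Pol_n` is closed under colimits of shape `J`. -/
theorem pol_closed_under_colimits (hI : IsInitial (𝟙_ C))
    {J : Type*} [SmallCategory J] [HasColimitsOfShape J A]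
    (n : ℕ) (D : J ⥤ C ⥤ A) (h : ∀ j : J, Pol hI n (D.obj j)) :
    Pol hI n (colimit D) :=
  Pol.colimit hI n D h
end

section
/- Let n ≥ 0 and let F be a functor in Fct(C, A) belonging to Pol_n. Then any direct summand of F belongs to Pol_n: if F is isomorphic to a biproduct G ⊕ G' in Fct(C, A), then G ∈ Pol_n. -/
open CategoryTheory CategoryTheory.Limits CategoryTheory.MonoidalCategory

variable {C : Type*} [Category C] [MonoidalCategory C]
variable {A : Type*} [Category A] [Abelian A]

instance PolAux.isStableUnderRetracts (hI : IsInitial (𝟙_ C)) (n : ℕ) :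
    ObjectProperty.IsStableUnderRetracts (PolAux (A := A) hI n) where
  of_retract {G F} h hF := by
    induction n generalizing F G with
    | zero => exact IsZero.of_mono h.i hF
    | succ n ih => exact fun x ↦ ih (h.map (deltaF hI x)) (hF x)

/-- A direct summand of a functor in `Pol_n` belongs to `Pol_n`. -/
theorem pol_direct_summand (hI : IsInitial (𝟙_ C)) (n : ℕ) (F G G' : C ⥤ A)
    (hF : Pol hI n F) (h : Nonempty (F ≅ G ⊞ G')) : Pol hI n G := by
  obtain ⟨e⟩ := h
  exact ObjectProperty.IsStableUnderRetracts.of_biprod_left (PolAux hI _)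
    (ObjectProperty.prop_of_iso _ e hF)
end

section
/- A functor F in Fct(C, A) belongs to Pol_0 (i.e., δ_x(F) = 0 for every object x of C) if and only if F is a quotient of a constant functor, i.e., there exist an object a of A and an epimorphism in Fct(C, A) from the constant functor with value a onto F. Moreover, in this case the canonical natural transformation from the constant functor with value F(𝟙) to F (induced by initiality of 𝟙) is an epimorphism. -/
open CategoryTheory CategoryTheory.Limits CategoryTheory.MonoidalCategory

variable {C : Type*} [Category C] [MonoidalCategory C]
variable {A : Type*} [Category A] [Abelian A]

/-- The canonical natural transformation from the constant functor with value `F(𝟙)`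
to `F`, induced by initiality of the unit. -/
def constToSelf (hI : IsInitial (𝟙_ C)) (F : C ⥤ A) :
    (Functor.const C).obj (F.obj (𝟙_ C)) ⟶ F where
  app c := F.map (hI.to c)
  naturality c c' f := by
    dsimp
    rw [Category.id_comp, ← F.map_comp, hI.hom_ext (hI.to c ≫ f) (hI.to c')]

/-!
`δ_x F = 0` says exactly that `i_x(F)` is an epimorphism. If `p : a ⟶ F` is an epimorphism from
a constant functor, then `p_c ≫ i_x(F)_c = p_{x ⊗ c}` is epi, hence so is `i_x(F)_c`. Conversely
the canonical map `F(𝟙) ⟶ F(c)` is `i_c(F)` at `𝟙` followed by the isomorphism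
`F(c ⊗ 𝟙) ≅ F(c)`, so it is epi as soon as every `i_x(F)` is.
-/

section

variable {D : Type*} [Category D] (hI : IsInitial (𝟙_ C)) (G : C ⥤ D)

lemma constToSelf_app_eq_iApp_comp (c : C) :
    (constToSelf hI G).app c = (iApp hI c G).app (𝟙_ C) ≫ G.map (ρ_ c).hom := by
  change G.map (hI.to c) = G.map ((λ_ (𝟙_ C)).inv ≫ hI.to c ▷ 𝟙_ C) ≫ G.map (ρ_ c).hom
  rw [← G.map_comp]
  exact congrArg G.map (hI.hom_ext _ _)

lemma app_comp_iApp_app {d : D} (p : (Functor.const C).obj d ⟶ G) (x c : C) :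
    p.app c ≫ (iApp hI x G).app c = p.app (x ⊗ c) := by
  simpa [iApp] using (p.naturality ((λ_ c).inv ≫ hI.to x ▷ c)).symm

lemma epi_iApp_of_epi_from_const [HasPushouts D] {d : D} (p : (Functor.const C).obj d ⟶ G)
    [Epi p] (x : C) : Epi (iApp hI x G) := by
  rw [NatTrans.epi_iff_epi_app]
  intro c
  have : Epi (p.app c ≫ (iApp hI x G).app c) := by
    rw [app_comp_iApp_app]
    exact (NatTrans.epi_iff_epi_app p).1 ‹_› _
  exact epi_of_epi (p.app c) _

lemma epi_constToSelf_of_forall_epi_iApp [HasPushouts D] (h : ∀ x : C, Epi (iApp hI x G)) :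
    Epi (constToSelf hI G) := by
  rw [NatTrans.epi_iff_epi_app]
  intro c
  have : Epi ((iApp hI c G).app (𝟙_ C)) := (NatTrans.epi_iff_epi_app _).1 (h c) _
  rw [constToSelf_app_eq_iApp_comp]
  exact epi_comp _ _

end

section

variable (hI : IsInitial (𝟙_ C)) (F : C ⥤ A)

lemma isZero_deltaF_obj_iff_epi_iApp (x : C) :
    IsZero ((deltaF hI x).obj F) ↔ Epi (iApp hI x F) := by
  let evalF := (evaluation (C ⥤ A) (C ⥤ A)).obj F
  have e : (deltaF hI x).obj F ≅ cokernel (evalF.map (iNT (A := A) hI x)) :=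
    PreservesCokernel.iso evalF _
  change IsZero _ ↔ Epi (evalF.map (iNT (A := A) hI x))
  constructor
  · exact fun h => Preadditive.epi_of_isZero_cokernel _ (h.of_iso e.symm)
  · exact fun _ => (isZero_zero _).of_iso (e ≪≫ cokernel.ofEpi _)

lemma pol_zero_iff_forall_epi_iApp : Pol hI 0 F ↔ ∀ x : C, Epi (iApp hI x F) :=
  forall_congr' fun x => isZero_deltaF_obj_iff_epi_iApp hI F x

end

/-- `F ∈ Pol_0` iff `F` is a quotient of a constant functor; in that case the
canonical map from the constant functor with value `F(𝟙)` is an epimorphism. -/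
theorem pol_zero_iff_quotient_of_constant (hI : IsInitial (𝟙_ C)) (F : C ⥤ A) :
    (Pol hI 0 F ↔ ∃ (a : A) (p : (Functor.const C).obj a ⟶ F), Epi p) ∧
    (Pol hI 0 F → Epi (constToSelf hI F)) := by
  have epi_constToSelf (h : Pol hI 0 F) : Epi (constToSelf hI F) :=
    epi_constToSelf_of_forall_epi_iApp hI F ((pol_zero_iff_forall_epi_iApp hI F).1 h)
  refine ⟨⟨fun h => ⟨_, _, epi_constToSelf h⟩, ?_⟩, epi_constToSelf⟩
  rintro ⟨a, p, hp⟩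
  exact (pol_zero_iff_forall_epi_iApp hI F).2 (epi_iApp_of_epi_from_const hI F p)
end

section
/- For every natural number n and every element w of the free group F_n, the following equality holds in the braid group B_{n+2}: ς_{n+1}(φ(w)) = σ_1^{-1} · sh(ς_n(w)) · σ_1, where φ : F_n → F_{n+1} is the group homomorphism determined by φ(g_i) = g_{i+1} for 1 ≤ i ≤ n, and sh : B_{n+1} → B_{n+2} is the shift homomorphism. Equivalently, σ_1^{-1} · sh(ς_n(w)) = ς_{n+1}(φ(w)) · σ_1^{-1} in B_{n+2}; this expresses that the family of morphisms {ς_n} satisfies Condition 2.2 of the paper (via its reformulation in Lemma 2.4, where the braiding b_{1,1} of the braid groupoid is the generator σ_1). -/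
open FreeGroup

/-- The braid relations on `m` Artin generators (indexed by `Fin m`, where index `k`
stands for the classical generator `σ_{k+1}`):
`σ_i σ_j σ_i = σ_j σ_i σ_j` when `|i - j| = 1` and `σ_i σ_j = σ_j σ_i` when `|i - j| ≥ 2`. -/
def braidRels (m : ℕ) : Set (FreeGroup (Fin m)) :=
  {r | (∃ i j : Fin m, (i : ℕ) + 1 = (j : ℕ) ∧
          r = of i * of j * of i * (of j * of i * of j)⁻¹) ∨
       (∃ i j : Fin m, (i : ℕ) + 2 ≤ (j : ℕ) ∧
          r = of i * of j * (of j * of i)⁻¹)}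

/-- `Braid m` is the braid group `B_{m+1}` on `m + 1` strands, presented with `m` Artin
generators `σ_1, …, σ_m` (index `k : Fin m` corresponds to `σ_{k+1}`). -/
abbrev Braid (m : ℕ) := PresentedGroup (braidRels m)

/-- `sig m k` is the Artin generator `σ_{k+1}` of the braid group `B_{m+1}` when `k < m`
(and junk value `1` otherwise). -/
def sig (m : ℕ) (k : ℕ) : Braid m :=
  if h : k < m then PresentedGroup.of (⟨k, h⟩ : Fin m) else 1

/-- `pword m j` is the product `σ_j σ_{j-1} ⋯ σ_1` in `B_{m+1}` (classical notation),
i.e. `sig m (j-1) * ⋯ * sig m 0`. -/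
def pword (m j : ℕ) : Braid m := ((List.range j).reverse.map (sig m)).prod

/-- The image of the free generator `g_{j+1}` of `F_n` under `ς_n : F_n → B_{n+1}`:
`σ_1⁻¹ σ_2⁻¹ ⋯ σ_{i-1}⁻¹ σ_i² σ_{i-1} ⋯ σ_2 σ_1` where `i = j + 1`. -/
def sigmaWord (n : ℕ) (j : Fin n) : Braid n :=
  (pword n j.val)⁻¹ * (sig n j.val) ^ 2 * pword n j.val

/-- The pure braid local system morphism `ς_n : F_n → B_{n+1}`, determined on the free
generators `g_1, …, g_n` of `F_n` (indexed by `Fin n`) by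
`ς_n(g_i) = σ_1⁻¹ σ_2⁻¹ ⋯ σ_{i-1}⁻¹ σ_i² σ_{i-1} ⋯ σ_2 σ_1`. -/
def varsigma (n : ℕ) : FreeGroup (Fin n) →* Braid n :=
  FreeGroup.lift (sigmaWord n)

/-- The homomorphism `φ : F_n → F_{n+1}` with `φ(g_i) = g_{i+1}`. -/
def phiF (n : ℕ) : FreeGroup (Fin n) →* FreeGroup (Fin (n + 1)) :=
  FreeGroup.lift fun j => FreeGroup.of j.succ

/-! Since `sh` sends `σ_i ⋯ σ_1` to `σ_{i+1} ⋯ σ_2 = σ_{i+1} ⋯ σ_1 · σ_1⁻¹`, conjugating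
`sh(ς_n(g_i))` by `σ_1` gives `ς_{n+1}(g_{i+1})`; both sides of the identity are homomorphisms
in `w`, so agreement on free generators suffices. -/

lemma pword_zero (m : ℕ) : pword m 0 = 1 := rfl

lemma pword_succ (m j : ℕ) : pword m (j + 1) = sig m j * pword m j := by
  simp [pword, List.range_succ]

section Shift

variable {n : ℕ} (sh : Braid n →* Braid (n + 1))
  (hsh : ∀ k : Fin n, sh (PresentedGroup.of k) = PresentedGroup.of k.succ)
include hsh

lemma map_sig_of_shift {k : ℕ} (hk : k < n) : sh (sig n k) = sig (n + 1) (k + 1) := by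
  simp only [sig, hk, Nat.succ_lt_succ hk, dif_pos, hsh]
  rfl

lemma map_pword_of_shift {j : ℕ} (hj : j ≤ n) :
    sh (pword n j) = pword (n + 1) (j + 1) * (sig (n + 1) 0)⁻¹ := by
  induction j with
  | zero => simp [pword_succ, pword_zero]
  | succ j ih =>
    rw [pword_succ, _root_.map_mul, map_sig_of_shift sh hsh (by omega), ih (by omega),
      pword_succ (n + 1) (j + 1)]
    group

lemma sigmaWord_succ_eq_conj_shift (j : Fin n) :
    sigmaWord (n + 1) j.succ = (sig (n + 1) 0)⁻¹ * sh (sigmaWord n j) * sig (n + 1) 0 := by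
  rw [sigmaWord, sigmaWord, Fin.val_succ, _root_.map_mul, _root_.map_mul, _root_.map_inv,
    _root_.map_pow, map_pword_of_shift sh hsh j.isLt.le, map_sig_of_shift sh hsh j.isLt]
  group

end Shift

/-- For every `w ∈ F_n`, the equality `ς_{n+1}(φ(w)) = σ_1⁻¹ · sh(ς_n(w)) · σ_1` holds in
`B_{n+2}`, where `sh : B_{n+1} → B_{n+2}` is the shift homomorphism `σ_i ↦ σ_{i+1}`
(Condition 2.2 of the paper, in the formulation of Lemma 2.4, for the pure braid local
system morphisms `ς_n`). -/
theorem varsigma_shift (n : ℕ) (sh : Braid n →* Braid (n + 1))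
    (hsh : ∀ k : Fin n, sh (PresentedGroup.of k) = PresentedGroup.of k.succ)
    (w : FreeGroup (Fin n)) :
    varsigma (n + 1) (phiF n w) = (sig (n + 1) 0)⁻¹ * sh (varsigma n w) * sig (n + 1) 0 := by
  suffices h : (varsigma (n + 1)).comp (phiF n) =
      (MulAut.conj (sig (n + 1) 0)⁻¹).toMonoidHom.comp (sh.comp (varsigma n)) by
    simpa using DFunLike.congr_fun h w
  refine FreeGroup.ext_hom _ _ fun j => ?_
  simpa [varsigma, phiF] using sigmaWord_succ_eq_conj_shift sh hsh j
end
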